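/- For every constant κ > 0, there exists a joint distribution of four random variables (A, B, C, D) on finite sets such that I(C:D) > I(C:D|A) + I(C:D|B) + I(A:B) + κ·(I(A:B|C) + H(C|A,B)). -/

import Mathlib

open scoped BigOperators Classical

noncomputable section

/-- `p` is a probability mass function on the finite type `Ω`. -/
def IsPMF {Ω : Type*} [Fintype Ω] (p : Ω → ℝ) : Prop :=
  (∀ ω, 0 ≤ p ω) ∧ ∑ ω, p ω = 1

/-- Probability of the event `X = s` under `p`. -/
def prOf {Ω S : Type*} [Fintype Ω] [DecidableEq S] (p : Ω → ℝ) (X : Ω → S) (s : S) : ℝ :=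
  ∑ ω ∈ Finset.univ.filter (fun ω => X ω = s), p ω

/-- Shannon entropy (in bits) of the random variable `X` under the pmf `p`. -/
def ent {Ω S : Type*} [Fintype Ω] [Fintype S] [DecidableEq S] (p : Ω → ℝ) (X : Ω → S) : ℝ :=
  - ∑ s : S, prOf p X s * Real.logb 2 (prOf p X s)

/-- Mutual information `I(X:Y) = H(X) + H(Y) - H(X,Y)`. -/
def mi {Ω S T : Type*} [Fintype Ω] [Fintype S] [Fintype T] [DecidableEq S] [DecidableEq T]
    (p : Ω → ℝ) (X : Ω → S) (Y : Ω → T) : ℝ :=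
  ent p X + ent p Y - ent p (fun ω => (X ω, Y ω))

/-- Conditional mutual information `I(X:Y|Z) = H(X,Z) + H(Y,Z) - H(X,Y,Z) - H(Z)`. -/
def cmi {Ω S T U : Type*} [Fintype Ω] [Fintype S] [Fintype T] [Fintype U]
    [DecidableEq S] [DecidableEq T] [DecidableEq U]
    (p : Ω → ℝ) (X : Ω → S) (Y : Ω → T) (Z : Ω → U) : ℝ :=
  ent p (fun ω => (X ω, Z ω)) + ent p (fun ω => (Y ω, Z ω))
    - ent p (fun ω => (X ω, Y ω, Z ω)) - ent p Z

/-- Conditional entropy `H(X|Y) = H(X,Y) - H(Y)`. -/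
def condEnt {Ω S T : Type*} [Fintype Ω] [Fintype S] [Fintype T] [DecidableEq S] [DecidableEq T]
    (p : Ω → ℝ) (X : Ω → S) (Y : Ω → T) : ℝ :=
  ent p (fun ω => (X ω, Y ω)) - ent p Y

/-- The four coordinate random variables on `Bool × Bool × Bool × Bool`. -/
def vA : Bool × Bool × Bool × Bool → Bool := fun ω => ω.1
def vB : Bool × Bool × Bool × Bool → Bool := fun ω => ω.2.1
def vC : Bool × Bool × Bool × Bool → Bool := fun ω => ω.2.2.1
def vD : Bool × Bool × Bool × Bool → Bool := fun ω => ω.2.2.2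

/-! In the witness, `C` is a function of `(A, B)`, and once `A` (or `B`) is known one of `C`, `D`
is constant; hence `H(C|A,B) = I(C:D|A) = I(C:D|B) = 0`. Writing `δ = 1 - h(1/2 + ε)` for the
deficit of the binary entropy in bits, `I(A:B|C) = δ` and `I(C:D) - I(A:B) = 2ε - 2δ`, so the
inequality fails by `2ε - (2 + κ)δ`. Since `δ = O(ε²)`, this is positive for small `ε`. -/

section

open Real

lemma log_two_sub_binEntropy_le {ε : ℝ} (h₀ : -2⁻¹ < ε) (h₁ : ε < 2⁻¹) :
    log 2 - binEntropy (2⁻¹ + ε) ≤ 4 * ε ^ 2 := by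
  have log_half_mul (s : ℝ) (hs : 0 < 1 + s) : log (2⁻¹ * (1 + s)) = log (1 + s) - log 2 := by
    rw [log_mul (by norm_num) hs.ne', log_inv]
    ring
  have hplus : log (1 + 2 * ε) ≤ 2 * ε := by
    linarith [log_le_sub_one_of_pos (x := 1 + 2 * ε) (by linarith)]
  have hminus : log (1 + -(2 * ε)) ≤ -(2 * ε) := by
    linarith [log_le_sub_one_of_pos (x := 1 + -(2 * ε)) (by linarith)]
  have hp := log_half_mul (2 * ε) (by linarith)
  have hq := log_half_mul (-(2 * ε)) (by linarith)
  rw [show 2⁻¹ * (1 + 2 * ε) = 2⁻¹ + ε by ring] at hp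
  rw [show 2⁻¹ * (1 + -(2 * ε)) = 1 - (2⁻¹ + ε) by ring] at hq
  rw [binEntropy, log_inv, log_inv, hp, hq]
  nlinarith [mul_le_mul_of_nonneg_left hplus (by linarith : (0 : ℝ) ≤ 2⁻¹ + ε),
    mul_le_mul_of_nonneg_left hminus (by linarith : (0 : ℝ) ≤ 2⁻¹ - ε)]

lemma binEntropy_div_log_two (p : ℝ) :
    binEntropy p / log 2 = -(p * logb 2 p + (1 - p) * logb 2 (1 - p)) := by
  simp only [binEntropy, log_inv, logb]
  ring

lemma logb_two_half : logb 2 (1 / 2) = -1 := by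
  rw [one_div, logb_inv, logb_self_eq_one one_lt_two]

def witness (ε : ℝ) : Bool × Bool × Bool × Bool → ℝ
  | (true, true, false, false) | (false, false, true, true) => 1 / 2 - ε
  | (false, true, true, false) | (true, false, true, false) => ε
  | _ => 0

lemma isPMF_witness {ε : ℝ} (h₀ : 0 ≤ ε) (h₁ : ε ≤ 1 / 2) : IsPMF (witness ε) := by
  refine ⟨fun ω => ?_, ?_⟩
  · rcases ω with ⟨_ | _, _ | _, _ | _, _ | _⟩ <;> simp only [witness] <;> linarith
  · simp only [witness, Fintype.sum_prod_type, Fintype.sum_bool]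
    ring

lemma prOf_witness {S : Type*} [DecidableEq S] (ε : ℝ) (X : Bool × Bool × Bool × Bool → S)
    (s : S) :
    prOf (witness ε) X s
      = (if X (true, true, false, false) = s then 1 / 2 - ε else 0)
        + (if X (false, false, true, true) = s then 1 / 2 - ε else 0)
        + (if X (false, true, true, false) = s then ε else 0)
        + (if X (true, false, true, false) = s then ε else 0) := by
  simp only [prOf, Finset.sum_filter, witness, Fintype.sum_prod_type, Fintype.sum_bool, ite_self,
    add_zero, zero_add]
  ring

lemma condEnt_witness_vC_vAvB (ε : ℝ) : condEnt (witness ε) vC (fun ω => (vA ω, vB ω)) = 0 := by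
  simp only [condEnt, ent, Fintype.sum_prod_type, Fintype.sum_bool, prOf_witness, vA, vB, vC]
  norm_num
  ring

lemma cmi_witness_vC_vD_vA (ε : ℝ) : cmi (witness ε) vC vD vA = 0 := by
  simp only [cmi, ent, Fintype.sum_prod_type, Fintype.sum_bool, prOf_witness, vA, vC, vD]
  norm_num
  ring_nf

lemma cmi_witness_vC_vD_vB (ε : ℝ) : cmi (witness ε) vC vD vB = 0 := by
  simp only [cmi, ent, Fintype.sum_prod_type, Fintype.sum_bool, prOf_witness, vB, vC, vD]
  norm_num
  ring_nf

lemma cmi_witness_vA_vB_vC (ε : ℝ) :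
    cmi (witness ε) vA vB vC = 1 - binEntropy (2⁻¹ + ε) / log 2 := by
  rw [binEntropy_div_log_two]
  simp only [cmi, ent, Fintype.sum_prod_type, Fintype.sum_bool, prOf_witness, vA, vB, vC]
  norm_num [logb_two_half]
  ring_nf

lemma mi_witness_vC_vD_sub_mi_witness_vA_vB {ε : ℝ} (hε : ε ≠ 0) :
    mi (witness ε) vC vD - mi (witness ε) vA vB
      = 2 * ε - 2 * (1 - binEntropy (2⁻¹ + ε) / log 2) := by
  rw [binEntropy_div_log_two]
  simp only [mi, ent, Fintype.sum_prod_type, Fintype.sum_bool, prOf_witness, vA, vB, vC, vD]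
  norm_num [logb_two_half]
  rw [← two_mul, logb_mul two_ne_zero hε, logb_self_eq_one one_lt_two]
  ring_nf

end

theorem new_ineq_essentially_conditional (κ : ℝ) (hκ : 0 < κ) :
    ∃ p : Bool × Bool × Bool × Bool → ℝ, IsPMF p ∧
      cmi p vC vD vA + cmi p vC vD vB + mi p vA vB
          + κ * (cmi p vA vB vC + condEnt p vC (fun ω => (vA ω, vB ω)))
        < mi p vC vD := by
  have hlog₀ : 0 < Real.log 2 := Real.log_pos one_lt_two
  have hlog₁ : Real.log 2 < 1 := by linarith [Real.log_two_lt_d9]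
  set ε := Real.log 2 / (4 * (2 + κ)) with hε
  have hε₀ : 0 < ε := by positivity
  have hε₁ : ε < 2⁻¹ := by
    rw [hε, div_lt_iff₀ (by positivity)]
    linarith
  refine ⟨witness ε, isPMF_witness hε₀.le (by linarith), ?_⟩
  have hdeficit : (2 + κ) * (1 - Real.binEntropy (2⁻¹ + ε) / Real.log 2) ≤ ε :=
    calc (2 + κ) * (1 - Real.binEntropy (2⁻¹ + ε) / Real.log 2)
        = (2 + κ) * (Real.log 2 - Real.binEntropy (2⁻¹ + ε)) / Real.log 2 := by
          field_simp
      _ ≤ (2 + κ) * (4 * ε ^ 2) / Real.log 2 := by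
          gcongr
          exact log_two_sub_binEntropy_le (by linarith) hε₁
      _ = ε := by
          rw [hε]
          field_simp
  rw [cmi_witness_vC_vD_vA, cmi_witness_vC_vD_vB, condEnt_witness_vC_vAvB, cmi_witness_vA_vB_vC]
  linarith [mi_witness_vC_vD_sub_mi_witness_vA_vB hε₀.ne']

end
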